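/- For every weight w with 0 < w ≤ 1, the pair (τ*(w), q*(w)) with τ*(w) = (α − γ − k)/2 + k/(2w) and q*(w) = (w(α − γ) − (1−w)k)/(4w(β + δ)) solves the weighted bilevel tax problem: q*(w) is the unique maximizer of q ↦ π(τ*(w), q) over ℝ, and for every τ ∈ ℝ and every q ∈ ℝ that maximizes π(τ, ·) over ℝ, one has w·τ*(w)·q*(w) − (1−w)·k·q*(w) ≥ w·τ·q − (1−w)·k·q. -/

import Mathlib

/-!
The mine's profit is a concave quadratic in `q` with vertex `q̂(τ)`, and
`π(τ, q̂(τ)) - π(τ, q) = (β + δ) (q - q̂(τ))²`; so for `β + δ > 0` the best response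
`q̂(τ)` is the unique maximizer. Along best responses the government's objective is
`(wτ - (1 - w)k) q̂(τ)`, a concave quadratic in `τ` whose gap to its value at `τ*(w)`
is `w (τ - τ*(w))² / (2(β + δ))`.
-/

namespace MiningTax

def profit (α β γ δ φ τ q : ℝ) : ℝ :=
  (α - β * q) * q - (δ * q ^ 2 + γ * q + φ) - τ * q

noncomputable def bestResponse (α β γ δ τ : ℝ) : ℝ :=
  (α - γ - τ) / (2 * (β + δ))

noncomputable def optimalTax (α γ k w : ℝ) : ℝ :=
  (α - γ - k) / 2 + k / (2 * w)

def weightedObjective (k w τ q : ℝ) : ℝ :=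
  w * τ * q - (1 - w) * k * q

variable {α β γ δ φ : ℝ}

theorem profit_bestResponse_sub_profit (hs : β + δ ≠ 0) (τ q : ℝ) :
    profit α β γ δ φ τ (bestResponse α β γ δ τ) - profit α β γ δ φ τ q =
      (β + δ) * (q - bestResponse α β γ δ τ) ^ 2 := by
  unfold profit bestResponse
  field_simp
  ring

theorem profit_le_profit_bestResponse (hs : 0 < β + δ) (τ q : ℝ) :
    profit α β γ δ φ τ q ≤ profit α β γ δ φ τ (bestResponse α β γ δ τ) := by
  have hgap := profit_bestResponse_sub_profit (α := α) (γ := γ) (φ := φ) hs.ne' τ q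
  linarith [mul_nonneg hs.le (sq_nonneg (q - bestResponse α β γ δ τ))]

theorem profit_eq_profit_bestResponse_iff (hs : 0 < β + δ) {τ q : ℝ} :
    profit α β γ δ φ τ q = profit α β γ δ φ τ (bestResponse α β γ δ τ) ↔
      q = bestResponse α β γ δ τ := by
  have hgap := profit_bestResponse_sub_profit (α := α) (γ := γ) (φ := φ) hs.ne' τ q
  constructor
  · intro h
    rw [← h, sub_self, eq_comm, mul_eq_zero, pow_eq_zero_iff two_ne_zero, sub_eq_zero] at hgap
    exact hgap.resolve_left hs.ne'
  · rintro rfl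
    rfl

theorem forall_profit_le_profit_iff (hs : 0 < β + δ) {τ q : ℝ} :
    (∀ q', profit α β γ δ φ τ q' ≤ profit α β γ δ φ τ q) ↔
      q = bestResponse α β γ δ τ := by
  refine ⟨fun h => ?_, ?_⟩
  · exact (profit_eq_profit_bestResponse_iff hs).1
      (le_antisymm (profit_le_profit_bestResponse hs τ q) (h _))
  · rintro rfl
    exact profit_le_profit_bestResponse hs τ

theorem bestResponse_optimalTax {k w : ℝ} (hw : w ≠ 0) (hs : β + δ ≠ 0) :
    bestResponse α β γ δ (optimalTax α γ k w) =
      (w * (α - γ) - (1 - w) * k) / (4 * w * (β + δ)) := by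
  unfold bestResponse optimalTax
  field_simp
  ring

theorem weightedObjective_bestResponse_le_optimalTax {k w : ℝ} (hw : 0 < w) (hs : 0 < β + δ)
    (τ : ℝ) :
    weightedObjective k w τ (bestResponse α β γ δ τ) ≤
      weightedObjective k w (optimalTax α γ k w)
        (bestResponse α β γ δ (optimalTax α γ k w)) := by
  rw [← sub_nonneg]
  have hgap : weightedObjective k w (optimalTax α γ k w)
        (bestResponse α β γ δ (optimalTax α γ k w)) -
      weightedObjective k w τ (bestResponse α β γ δ τ) =
      w * (τ - optimalTax α γ k w) ^ 2 / (2 * (β + δ)) := by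
    unfold weightedObjective bestResponse optimalTax
    field_simp
    ring
  rw [hgap]
  positivity

end MiningTax

open MiningTax in
theorem mining_bilevel_optimum_general
    (α β γ δ φ k : ℝ) (hβ : 0 < β) (hδ : 0 < δ)
    (w : ℝ) (hw0 : 0 < w) :
    ∀ τs qs : ℝ,
      τs = (α - γ - k) / 2 + k / (2 * w) →
      qs = (w * (α - γ) - (1 - w) * k) / (4 * w * (β + δ)) →
      ((∀ q : ℝ,
          (α - β * q) * q - (δ * q ^ 2 + γ * q + φ) - τs * q ≤
          (α - β * qs) * qs - (δ * qs ^ 2 + γ * qs + φ) - τs * qs) ∧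
        (∀ q : ℝ,
          (α - β * q) * q - (δ * q ^ 2 + γ * q + φ) - τs * q =
          (α - β * qs) * qs - (δ * qs ^ 2 + γ * qs + φ) - τs * qs →
          q = qs) ∧
        (∀ τ q : ℝ,
          (∀ q' : ℝ,
            (α - β * q') * q' - (δ * q' ^ 2 + γ * q' + φ) - τ * q' ≤
            (α - β * q) * q - (δ * q ^ 2 + γ * q + φ) - τ * q) →
          w * τ * q - (1 - w) * k * q ≤ w * τs * qs - (1 - w) * k * qs)) := by
  intro τs qs hτs hqs
  have hs : 0 < β + δ := add_pos hβ hδ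
  replace hτs : τs = optimalTax α γ k w := hτs
  rw [← bestResponse_optimalTax hw0.ne' hs.ne', ← hτs] at hqs
  subst hqs hτs
  refine ⟨profit_le_profit_bestResponse hs _,
    fun q h => (profit_eq_profit_bestResponse_iff hs).1 h, fun τ q hq => ?_⟩
  obtain rfl : q = bestResponse α β γ δ τ := (forall_profit_le_profit_iff hs).1 hq
  exact weightedObjective_bestResponse_le_optimalTax hw0 hs τ

/-- Mining tax model: for `0 < w ≤ 1`, the pair `(τ*(w), q*(w))` solves the
weighted bilevel tax problem: `q*(w)` is the unique maximizer of
`q ↦ π(τ*(w), q)`, and the weighted objective at `(τ*(w), q*(w))` dominates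
that at any `(τ, q)` with `q` a maximizer of `π(τ, ·)`. -/
theorem mining_bilevel_optimum
    (α β γ δ φ k : ℝ) (hβ : 0 < β) (hδ : 0 < δ) (hk : 0 < k)
    (w : ℝ) (hw0 : 0 < w) (hw1 : w ≤ 1) :
    ∀ τs qs : ℝ,
      τs = (α - γ - k) / 2 + k / (2 * w) →
      qs = (w * (α - γ) - (1 - w) * k) / (4 * w * (β + δ)) →
      ((∀ q : ℝ,
          (α - β * q) * q - (δ * q ^ 2 + γ * q + φ) - τs * q ≤
          (α - β * qs) * qs - (δ * qs ^ 2 + γ * qs + φ) - τs * qs) ∧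
        (∀ q : ℝ,
          (α - β * q) * q - (δ * q ^ 2 + γ * q + φ) - τs * q =
          (α - β * qs) * qs - (δ * qs ^ 2 + γ * qs + φ) - τs * qs →
          q = qs) ∧
        (∀ τ q : ℝ,
          (∀ q' : ℝ,
            (α - β * q') * q' - (δ * q' ^ 2 + γ * q' + φ) - τ * q' ≤
            (α - β * q) * q - (δ * q ^ 2 + γ * q + φ) - τ * q) →
          w * τ * q - (1 - w) * k * q ≤ w * τs * qs - (1 - w) * k * qs)) :=
  mining_bilevel_optimum_general α β γ δ φ k hβ hδ w hw0
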